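/- Let μ ∈ ℕ_0^n be a multi-index with Σ_i μ_i = 2d having exactly two odd entries, in positions i and j. Then the polynomial m_μ := binom(2d,μ)·x^μ − d·binom(d−1, (μ−ε_i−ε_j)/2)·(x_i^{2d−1}x_j + x_i x_j^{2d−1}) satisfies Δ^{d−1}(m_μ) = 0. -/

import Mathlib

/-!
Write `μ = 2λ + α` with `α = εᵢ + εⱼ` and `|λ| = d - 1`. Each `∂ₖ²` lowers the `k`-th exponent
by two and kills the monomial when that exponent is `≤ 1`, so for any `0/1`-vector `α`
`Δ^{|λ|} x^{2λ+α} = binom(|λ|, λ) · (2λ+α)! · x^α`.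
This is proved by induction on `|λ|` after multiplying through by `λ!`: the term of `∂ₖ²` then
contributes `λₖ · (|λ|-1)! · (2λ+α)!`, and `∑ₖ λₖ = |λ|` takes the place of Pascal's rule for
multinomial coefficients. The three monomials of `m_μ` (with `λ = (d-1)εᵢ`, `(d-1)εⱼ` for the
last two) are thus sent to multiples of `xᵢxⱼ`, and the coefficients cancel because
`binom(2d, μ) · μ! = (2d)! = 2d · (2d-1)!`.
-/

open MvPolynomial

/-- The Laplacian operator `Δ = ∑ i, ∂²/∂xᵢ²` on `ℝ[x₁,…,xₙ]`. -/
noncomputable def lap {n : ℕ} (p : MvPolynomial (Fin n) ℝ) : MvPolynomial (Fin n) ℝ :=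
  ∑ i, pderiv i (pderiv i p)

open Nat Finsupp

theorem Finsupp.prod_factorial_eq_descFactorial_mul {σ : Type*} [Fintype σ] [DecidableEq σ]
    (f : σ →₀ ℕ) (k : σ) {r : ℕ} (hr : r ≤ f k) :
    ∏ j, (f j)! = (f k).descFactorial r * ∏ j, ((f - single k r) j)! := by
  rw [Fintype.prod_eq_mul_prod_compl k, Fintype.prod_eq_mul_prod_compl k, ← mul_assoc,
    tsub_apply, single_eq_same, mul_comm _ (f k - r)!, factorial_mul_descFactorial hr]
  congr 1
  refine Finset.prod_congr rfl fun j hj => ?_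
  rw [tsub_apply, single_eq_of_ne (by simpa using hj), Nat.sub_zero]

theorem Finsupp.single_one_add_single_one_apply_le_one {σ : Type*} {i j : σ} (hij : i ≠ j)
    (k : σ) : (single i 1 + single j 1 : σ →₀ ℕ) k ≤ 1 := by
  classical
  simp only [Finsupp.add_apply, single_apply]
  split_ifs with hi hj
  · exact absurd (hi.trans hj.symm) hij
  all_goals simp

theorem Finsupp.two_nsmul_add_tsub_single_two {σ : Type*} (l α : σ →₀ ℕ) {k : σ}
    (hk : l k ≠ 0) : 2 • l + α - single k 2 = 2 • (l - single k 1) + α := by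
  ext j
  rcases eq_or_ne k j with rfl | h <;> simp [*]
  omega

theorem MvPolynomial.X_pow_mul_X_pow_eq_monomial {σ R : Type*} [CommSemiring R] (i j : σ)
    (a b : ℕ) : (X i ^ a * X j ^ b : MvPolynomial σ R) = monomial (single i a + single j b) 1 := by
  rw [X_pow_eq_monomial, X_pow_eq_monomial, monomial_mul, one_mul]

theorem MvPolynomial.prod_X_pow_eq_monomial_equivFunOnFinite_symm {σ R : Type*} [Fintype σ]
    [CommSemiring R] (μ : σ → ℕ) :
    ∏ k, (X k : MvPolynomial σ R) ^ μ k = monomial (equivFunOnFinite.symm μ) 1 := by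
  rw [monomial_eq, C_1, one_mul, Finsupp.prod_fintype _ _ fun _ => pow_zero _]
  simp

section Laplacian

variable {n : ℕ}

noncomputable def lapLinearMap : Module.End ℝ (MvPolynomial (Fin n) ℝ) :=
  ∑ i, (pderiv i).toLinearMap ∘ₗ (pderiv i).toLinearMap

theorem coe_lapLinearMap : ⇑(lapLinearMap (n := n)) = lap := by
  ext1 p; simp [lapLinearMap, lap]

theorem iterate_lap_eq_coe_pow (m : ℕ) : lap^[m] = ⇑(lapLinearMap (n := n) ^ m) := by
  rw [Module.End.coe_pow, coe_lapLinearMap]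

theorem lap_monomial (s : Fin n →₀ ℕ) (a : ℝ) :
    lap (monomial s a) = ∑ k, monomial (s - single k 2) (a * (s k).descFactorial 2) := by
  refine Finset.sum_congr rfl fun k _ => ?_
  rw [pderiv_monomial, pderiv_monomial, tsub_tsub, ← single_add, tsub_apply, single_eq_same]
  simp [Nat.descFactorial, mul_assoc, mul_comm]

theorem iterate_lap_monomial_mul_prod_factorial (α : Fin n →₀ ℕ) (hα : ∀ k, α k ≤ 1)
    (l : Fin n →₀ ℕ) (a : ℝ) :
    lap^[l.degree] (monomial (2 • l + α) (a * ∏ k, ((l k)! : ℝ))) =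
      monomial α (a * l.degree ! * ∏ k, (((2 • l + α) k)! : ℝ)) := by
  obtain ⟨m, hm⟩ : ∃ m, l.degree = m := ⟨_, rfl⟩
  rw [hm]
  induction m generalizing l a with
  | zero =>
    obtain rfl : l = 0 := (degree_eq_zero_iff l).1 hm
    simp [factorial_eq_one.2 (hα _)]
  | succ m ih =>
    have hterm : ∀ k, lap^[m] (monomial (2 • l + α - single k 2)
        (a * (∏ j, ((l j)! : ℝ)) * ((2 • l + α) k).descFactorial 2)) =
          monomial α (a * m ! * (∏ j, (((2 • l + α) j)! : ℝ)) * l k) := by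
      intro k
      by_cases hlk : l k = 0
      · have : (2 • l + α) k < 2 := by simpa [hlk] using Nat.lt_succ_of_le (hα k)
        rw [descFactorial_eq_zero_iff_lt.2 this]
        simp [hlk, iterate_lap_eq_coe_pow]
      have hle : single k 1 ≤ l := by simpa [single_le_iff] using Nat.one_le_iff_ne_zero.2 hlk
      set l' := l - single k 1
      have hdeg : l'.degree = m := by
        have := congrArg degree (tsub_add_cancel_of_le hle)
        rw [map_add, degree_single, hm] at this
        exact Nat.add_right_cancel this
      have hexp : 2 • l + α - single k 2 = 2 • l' + α := two_nsmul_add_tsub_single_two l α hlk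
      have hl : ∏ j, ((l j)! : ℝ) = l k * ∏ j, ((l' j)! : ℝ) := by
        exact_mod_cast descFactorial_one (l k) ▸
          prod_factorial_eq_descFactorial_mul l k (r := 1) (by omega)
      have hμ : ∏ j, (((2 • l + α) j)! : ℝ) =
          ((2 • l + α) k).descFactorial 2 * ∏ j, (((2 • l' + α) j)! : ℝ) := by
        rw [← hexp]
        exact_mod_cast prod_factorial_eq_descFactorial_mul (2 • l + α) k (by simp; omega)
      rw [hexp, hl, hμ, mul_left_comm _ (l k : ℝ), ← mul_assoc, mul_right_comm, ih l' _ hdeg]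
      congr 1
      ring
    rw [Function.iterate_succ_apply, lap_monomial, iterate_lap_eq_coe_pow, map_sum]
    simp only [← iterate_lap_eq_coe_pow, hterm, ← map_sum, ← Finset.mul_sum]
    rw [← Nat.cast_sum, ← degree_eq_sum, hm, factorial_succ]
    congr 1
    push_cast
    ring

theorem iterate_lap_monomial_two_nsmul_add (α : Fin n →₀ ℕ) (hα : ∀ k, α k ≤ 1)
    (l : Fin n →₀ ℕ) (a : ℝ) :
    lap^[l.degree] (monomial (2 • l + α) a) =
      monomial α (a * Nat.multinomial Finset.univ l * ∏ k, (((2 • l + α) k)! : ℝ)) := by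
  have hP : ∏ k, ((l k)! : ℝ) ≠ 0 := Finset.prod_ne_zero_iff.2 fun k _ => by positivity
  have h := iterate_lap_monomial_mul_prod_factorial α hα l (a / ∏ k, ((l k)! : ℝ))
  rw [div_mul_cancel₀ a hP] at h
  rw [h, degree_eq_sum, ← multinomial_spec]
  congr 1
  push_cast
  field_simp

theorem iterate_lap_X_pow_mul_X {i j : Fin n} (hij : i ≠ j) (m : ℕ) :
    lap^[m] ((X i : MvPolynomial (Fin n) ℝ) ^ (2 * m + 1) * X j) =
      ((2 * m + 1)! : ℝ) • (X i * X j) := by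
  set α : Fin n →₀ ℕ := single i 1 + single j 1
  have hα : ∀ k, α k ≤ 1 := single_one_add_single_one_apply_le_one hij
  have hexp : 2 • single i m + α = single i (2 * m + 1) + single j 1 := by
    rw [smul_single, ← add_assoc, ← single_add, smul_eq_mul]
  have hmult : Nat.multinomial Finset.univ (single i m) = 1 := by
    rw [single_eq_pi_single]; exact Nat.multinomial_single _ _ _
  have hprod : ∏ k, (((single i (2 * m + 1) + single j 1 : Fin n →₀ ℕ) k)! : ℝ) =
      (2 * m + 1)! := by
    rw [Finset.prod_eq_single i (fun k _ hk => ?_) (by simp)]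
    · simp [hij.symm]
    · simp [single_apply, hk.symm, factorial_eq_one]; split_ifs <;> simp
  have h := iterate_lap_monomial_two_nsmul_add α hα (single i m) 1
  rw [degree_single, hexp, ← X_pow_mul_X_pow_eq_monomial, pow_one, hmult, hprod] at h
  rw [h, ← pow_one (X i), ← pow_one (X j), X_pow_mul_X_pow_eq_monomial, smul_monomial]
  simp [α]

theorem iterate_lap_prod_X_pow_of_two_odd {μ : Fin n → ℕ} {m : ℕ} {i j : Fin n} (hij : i ≠ j)
    (hsum : ∑ k, μ k = 2 * m + 2) (hoi : Odd (μ i)) (hoj : Odd (μ j))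
    (heven : ∀ k, k ≠ i → k ≠ j → Even (μ k)) :
    lap^[m] (∏ k, (X k : MvPolynomial (Fin n) ℝ) ^ μ k) =
      ((Nat.multinomial Finset.univ
          (fun k => (μ k - (if k = i then 1 else 0) - if k = j then 1 else 0) / 2) *
        ∏ k, (μ k)! : ℕ) : ℝ) • (X i * X j) := by
  set l : Fin n →₀ ℕ := equivFunOnFinite.symm
    fun k => (μ k - (if k = i then 1 else 0) - if k = j then 1 else 0) / 2
  set α : Fin n →₀ ℕ := single i 1 + single j 1
  have hα : ∀ k, α k ≤ 1 := single_one_add_single_one_apply_le_one hij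
  have hdecomp : ∀ k, μ k = 2 * l k + α k := by
    intro k
    simp only [l, α, coe_equivFunOnFinite_symm, Finsupp.add_apply, single_apply]
    rcases eq_or_ne k i with rfl | hki
    · obtain ⟨c, hc⟩ := hoi; simp [hij, hij.symm]; omega
    rcases eq_or_ne k j with rfl | hkj
    · obtain ⟨c, hc⟩ := hoj; simp [hki, hki.symm]; omega
    · obtain ⟨c, hc⟩ := heven k hki hkj; simp [hki, hkj, hki.symm, hkj.symm]; omega
  have hsplit : equivFunOnFinite.symm μ = 2 • l + α := by
    ext k; simpa using hdecomp k
  have hdeg : l.degree = m := by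
    have hα2 : ∑ k, α k = 2 := by simp [α, Finset.sum_add_distrib]
    rw [Finset.sum_congr rfl fun k _ => hdecomp k, Finset.sum_add_distrib, ← Finset.mul_sum,
      hα2] at hsum
    rw [degree_eq_sum]
    omega
  rw [prod_X_pow_eq_monomial_equivFunOnFinite_symm, hsplit, ← hdeg,
    iterate_lap_monomial_two_nsmul_add α hα l 1, ← hsplit, ← pow_one (X i), ← pow_one (X j),
    X_pow_mul_X_pow_eq_monomial, smul_monomial]
  simp [l, α]

end Laplacian

/-- **Statement 8.** If `μ ∈ ℕ₀ⁿ` sums to `2d` and has exactly two odd entries, in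
positions `i` and `j`, then the polynomial
`m_μ = binom(2d,μ)·xᵘ − d·binom(d−1,(μ−εᵢ−εⱼ)/2)·(xᵢ^{2d−1}xⱼ + xᵢxⱼ^{2d−1})`
satisfies `Δ^{d−1}(m_μ) = 0`. -/
theorem stmt8 {n d : ℕ} (hd : 1 ≤ d) (μ : Fin n → ℕ) (hsum : ∑ i, μ i = 2 * d)
    (i j : Fin n) (hij : i ≠ j) (hoi : Odd (μ i)) (hoj : Odd (μ j))
    (heven : ∀ k, k ≠ i → k ≠ j → Even (μ k)) :
    lap^[d - 1]
      ((Nat.multinomial Finset.univ μ : ℝ) • ∏ k, (X k : MvPolynomial (Fin n) ℝ) ^ μ k -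
        ((d : ℝ) * Nat.multinomial Finset.univ
            (fun k => (μ k - (if k = i then 1 else 0) - if k = j then 1 else 0) / 2)) •
          ((X i : MvPolynomial (Fin n) ℝ) ^ (2 * d - 1) * X j +
            X i * (X j : MvPolynomial (Fin n) ℝ) ^ (2 * d - 1))) = 0 := by
  have h2d : 2 * d - 1 = 2 * (d - 1) + 1 := by omega
  rw [iterate_lap_eq_coe_pow, map_sub, map_smul, map_smul, map_add, ← iterate_lap_eq_coe_pow, h2d]
  rw [iterate_lap_prod_X_pow_of_two_odd hij (by omega) hoi hoj heven,
    iterate_lap_X_pow_mul_X hij, mul_comm (X i) (X j ^ _), iterate_lap_X_pow_mul_X hij.symm,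
    mul_comm (X j) (X i), smul_smul, ← add_smul, smul_smul, ← sub_smul]
  refine smul_eq_zero_of_left (sub_eq_zero.2 ?_) _
  have hfact : (2 * d)! = 2 * d * (2 * (d - 1) + 1)! := by
    rw [← h2d, mul_factorial_pred (by omega)]
  norm_cast
  rw [mul_left_comm, mul_comm _ (∏ k, _), multinomial_spec, hsum, hfact]
  ring
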